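/- Let A be a complex Banach algebra with identity and let a, b ∈ A be Hirano invertible. If ab = 0, then a + b is Hirano invertible. -/

import Mathlib

/-!
Hirano invertibility is a purely ring-theoretic condition: `a` is Hirano invertible iff
`a - a ^ 3` is nilpotent. If `x` is a Hirano inverse, `e = a * x` is an idempotent commuting
with `a` and `a ^ 2 - e` is nilpotent, which forces `a ^ 2 - a ^ 4`, hence `a - a ^ 3`, to be
nilpotent. Conversely, `a ^ 2` is then idempotent modulo nilpotents; Newton's method in the
commutative ring `ℤ[a]` lifts it to an idempotent `e` there, and `a * (1 + a ^ 2 - e)⁻¹ * e`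
is a Hirano inverse of `a`.

If `a * b = 0`, then `(a + b) - (a + b) ^ 3 = (a - a ^ 3) - b (a + b) a + (b - b ^ 3)`, a sum of
nilpotents in which each summand times a later one vanishes; such a sum is nilpotent.
-/

/-- An element of a ring is *Hirano invertible* if there exists `x` with
`a * x = x * a`, `x = x * a * x`, and `a ^ 2 - a * x` nilpotent. -/
def IsHirano {R : Type*} [Ring R] (a : R) : Prop :=
  ∃ x : R, a * x = x * a ∧ x = x * a * x ∧ IsNilpotent (a ^ 2 - a * x)

open Polynomial

section Ring

variable {R : Type*} [Ring R]

theorem add_pow_succ_of_mul_eq_zero {x y : R} (h : x * y = 0) (k : ℕ) :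
    (x + y) ^ (k + 1) = (x + y) ^ k * x + y ^ (k + 1) := by
  induction k with
  | zero => simp
  | succ k ih =>
    rw [pow_succ _ (k + 1), ih, pow_succ _ (k + 1), mul_add, add_mul _ _ y, mul_assoc _ x y, h,
      mul_zero, zero_add]

theorem isNilpotent_add_of_mul_eq_zero {x y : R} (h : x * y = 0) (hx : IsNilpotent x)
    (hy : IsNilpotent y) : IsNilpotent (x + y) := by
  obtain ⟨n, hn⟩ := hx
  obtain ⟨m, hm⟩ := hy
  have hpow : ∀ j, (x + y) ^ (m + j) = (x + y) ^ m * x ^ j := by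
    intro j
    induction j with
    | zero => simp
    | succ j ih =>
      rw [← add_assoc, add_pow_succ_of_mul_eq_zero h, ih, pow_eq_zero_of_le (by omega) hm,
        add_zero, mul_assoc, ← pow_succ]
  exact ⟨m + n, by rw [hpow, hn, mul_zero]⟩

theorem isNilpotent_sub_sq_of_isIdempotentElem {t e : R} (he : IsIdempotentElem e)
    (hte : Commute t e) (h : IsNilpotent (t - e)) : IsNilpotent (t - t ^ 2) := by
  have hfac : t - t ^ 2 = (t - e) * (1 - t - e) := by
    have : (t - e) * (1 - t - e) = t - t ^ 2 + (e * t - t * e) + (e * e - e) := by noncomm_ring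
    rw [this, hte.eq, he.eq]
    abel
  have h1 : Commute (t - e) t := (Commute.refl t).sub_left hte.symm
  have h2 : Commute (t - e) e := hte.sub_left (Commute.refl e)
  rw [hfac]
  exact (((Commute.one_right _).sub_right h1).sub_right h2).isNilpotent_mul_right h

theorem isNilpotent_sub_pow_three_iff {a : R} :
    IsNilpotent (a - a ^ 3) ↔ IsNilpotent (a ^ 2 - (a ^ 2) ^ 2) := by
  constructor
  · intro h
    have hfac : a ^ 2 - (a ^ 2) ^ 2 = a * (a - a ^ 3) := by noncomm_ring
    rw [hfac]
    exact ((Commute.refl a).sub_right ((Commute.refl a).pow_right 3)).isNilpotent_mul_left h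
  · intro h
    have hfac : (a - a ^ 3) ^ 2 = (a ^ 2 - (a ^ 2) ^ 2) * (1 - a ^ 2) := by noncomm_ring
    have hsq : Commute (a ^ 2) (a ^ 2) := Commute.refl _
    have hcomm : Commute (a ^ 2 - (a ^ 2) ^ 2) (1 - a ^ 2) :=
      (Commute.one_right _).sub_right (hsq.sub_left (hsq.pow_left 2))
    refine IsNilpotent.of_pow (m := 2) ?_
    rw [hfac]
    exact hcomm.isNilpotent_mul_right h

theorem add_sub_pow_three_of_mul_eq_zero {a b : R} (hab : a * b = 0) :
    a + b - (a + b) ^ 3 = (a - a ^ 3) + (-(b * (a + b) * a) + (b - b ^ 3)) := by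
  have : a + b - (a + b) ^ 3 = (a - a ^ 3) + (-(b * (a + b) * a) + (b - b ^ 3))
      - (a * (a * b) + a * b * (a + b) + b * (a * b)) := by noncomm_ring
  rw [this, hab]
  simp

theorem isNilpotent_add_sub_pow_three_of_mul_eq_zero {a b : R} (hab : a * b = 0)
    (ha : IsNilpotent (a - a ^ 3)) (hb : IsNilpotent (b - b ^ 3)) :
    IsNilpotent (a + b - (a + b) ^ 3) := by
  have hvanish : ∀ z w : R, z * a * (b * w) = 0 := fun z w => by
    rw [mul_assoc, ← mul_assoc a, hab, zero_mul, mul_zero]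
  have ha' : a - a ^ 3 = (1 - a ^ 2) * a := by noncomm_ring
  have hb' : b - b ^ 3 = b * (1 - b ^ 2) := by noncomm_ring
  have hc : -(b * (a + b) * a) = -(b * (a + b)) * a := by noncomm_ring
  have hc' : -(b * (a + b) * a) = b * -((a + b) * a) := by noncomm_ring
  have hc_nil : IsNilpotent (-(b * (a + b) * a)) := by
    refine ⟨2, ?_⟩
    rw [sq]
    nth_rw 1 [hc]
    rw [hc']
    exact hvanish _ _
  rw [add_sub_pow_three_of_mul_eq_zero hab]
  refine isNilpotent_add_of_mul_eq_zero ?_ ha (isNilpotent_add_of_mul_eq_zero ?_ hc_nil hb)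
  · rw [ha', hc', hb', ← mul_add]
    exact hvanish _ _
  · rw [hc, hb']
    exact hvanish _ _

theorem IsHirano.map {S F : Type*} [Ring S] [FunLike F R S] [RingHomClass F R S] (f : F) {a : R}
    (h : IsHirano a) : IsHirano (f a) := by
  obtain ⟨x, hcomm, hx, hnil⟩ := h
  refine ⟨f x, by rw [← map_mul, ← map_mul, hcomm], ?_, ?_⟩
  · rw [← map_mul, ← map_mul, ← hx]
  · simpa using hnil.map f

end Ring

section CommRing

variable {R : Type*} [CommRing R]

theorem exists_isIdempotentElem_isNilpotent_sub {t : R} (h : IsNilpotent (t - t ^ 2)) :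
    ∃ e, IsIdempotentElem e ∧ IsNilpotent (t - e) := by
  have hP : IsNilpotent (aeval t (X ^ 2 - X : ℤ[X])) := by
    rw [map_sub, map_pow, aeval_X, ← neg_sub, isNilpotent_neg_iff]
    exact h
  have hP' : IsUnit (aeval t (derivative (X ^ 2 - X : ℤ[X]))) := by
    have hd : aeval t (derivative (X ^ 2 - X : ℤ[X])) = 2 * t - 1 := by simp [map_ofNat]
    have hsq : (2 * t - 1) ^ 2 = 1 - 4 * (t - t ^ 2) := by ring
    rw [hd, ← isUnit_pow_iff two_ne_zero, hsq]
    exact ((Commute.all _ _).isNilpotent_mul_left h).isUnit_one_sub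
  obtain ⟨e, ⟨hnil, he⟩, -⟩ := existsUnique_nilpotent_sub_and_aeval_eq_zero hP hP'
  refine ⟨e, ?_, hnil⟩
  rw [map_sub, map_pow, aeval_X, sub_eq_zero, sq] at he
  exact he

theorem isHirano_of_isIdempotentElem {a e : R} (he : IsIdempotentElem e)
    (h : IsNilpotent (a ^ 2 - e)) : IsHirano a := by
  obtain ⟨u, hu⟩ := h.isUnit_one_add
  have hax : a * (a * ↑u⁻¹ * e) = e := by
    linear_combination e * u.inv_mul + ↑u⁻¹ * he.eq - ↑u⁻¹ * e * hu
  refine ⟨a * ↑u⁻¹ * e, by ring, ?_, by rwa [hax]⟩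
  linear_combination (-(a * ↑u⁻¹ * e)) * hax - a * ↑u⁻¹ * he.eq

end CommRing

theorem isHirano_iff_isNilpotent_sub_pow_three {R : Type*} [Ring R] {a : R} :
    IsHirano a ↔ IsNilpotent (a - a ^ 3) := by
  constructor
  · rintro ⟨x, hcomm, hx, hnil⟩
    rw [isNilpotent_sub_pow_three_iff]
    refine isNilpotent_sub_sq_of_isIdempotentElem (e := a * x) ?_ ?_ hnil
    · show a * x * (a * x) = a * x
      rw [mul_assoc, ← mul_assoc x a x, ← hx]
    · exact ((Commute.refl a).mul_right hcomm).pow_left 2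
  · intro h
    let S := Algebra.adjoin ℤ {a}
    let a' : S := ⟨a, Algebra.self_mem_adjoin_singleton ℤ a⟩
    have h' : IsNilpotent (a' - a' ^ 3) :=
      (IsNilpotent.map_iff (f := S.val) Subtype.val_injective).mp h
    obtain ⟨e, he, hnil⟩ :=
      exists_isIdempotentElem_isNilpotent_sub (isNilpotent_sub_pow_three_iff.mp h')
    exact (isHirano_of_isIdempotentElem he hnil).map S.val

theorem hirano_add_of_mul_eq_zero_general {A : Type*} [NormedRing A]
    (a b : A) (ha : IsHirano a) (hb : IsHirano b) (hab : a * b = 0) :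
    IsHirano (a + b) := by
  rw [isHirano_iff_isNilpotent_sub_pow_three] at ha hb ⊢
  exact isNilpotent_add_sub_pow_three_of_mul_eq_zero hab ha hb

/-- If `a, b` are Hirano invertible and `a * b = 0`, then `a + b` is Hirano invertible. -/
theorem hirano_add_of_mul_eq_zero {A : Type*} [NormedRing A] [NormedAlgebra ℂ A]
    [CompleteSpace A] (a b : A) (ha : IsHirano a) (hb : IsHirano b) (hab : a * b = 0) :
    IsHirano (a + b) :=
  hirano_add_of_mul_eq_zero_general a b ha hb hab
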